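/- (Optimal AF relay gain) Let a > 0, b > 0 and D > 0, and define f(d) = (1 + a·b·d)²/(b²d² + 1) for d ∈ [0, D]. Then f attains its maximum over [0, D] at d* = min{a/b, D}; that is, for every d ∈ [0, D], f(d) ≤ f(min{a/b, D}). -/

import Mathlib

/-!
Substituting `x = b d` turns the received SNR into `afGain a x = (1 + a x)² / (x² + 1)`.
By Cauchy–Schwarz, `(1 + a x)² ≤ (1 + a²)(1 + x²)`, so it is globally maximised at `x = a`;
and its derivative is proportional to `(1 + a x)(a - x)`, so it increases on `[0, a]`.
Hence the best admissible `d` is `a / b` when the power budget allows it, and the largest admissible gain `D` otherwise.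
-/

open Set

noncomputable def afGain (a x : ℝ) : ℝ := (1 + a * x) ^ 2 / (x ^ 2 + 1)

lemma afGain_le_afGain_self (a x : ℝ) : afGain a x ≤ afGain a a := by
  unfold afGain
  rw [div_le_div_iff₀ (by positivity) (by positivity)]
  nlinarith [mul_nonneg (by positivity : (0 : ℝ) ≤ a ^ 2 + 1) (sq_nonneg (a - x))]

lemma afGain_monotoneOn (a : ℝ) : MonotoneOn (afGain a) (Icc 0 a) := by
  rintro x ⟨hx0, hxa⟩ y ⟨-, hya⟩ hxy
  unfold afGain
  rw [div_le_div_iff₀ (by positivity) (by positivity)]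
  have hfactor : (1 + a * y) ^ 2 * (x ^ 2 + 1) - (1 + a * x) ^ 2 * (y ^ 2 + 1)
      = (y - x) * ((a - x) * (1 + a * y) + (a - y) * (1 + a * x)) := by ring
  have ha : 0 ≤ a := hx0.trans hxa
  have hpos : 0 ≤ (y - x) * ((a - x) * (1 + a * y) + (a - y) * (1 + a * x)) := by
    have hy0 : 0 ≤ y := hx0.trans hxy
    apply mul_nonneg (sub_nonneg.2 hxy)
    exact add_nonneg (mul_nonneg (sub_nonneg.2 hxa) (by positivity))
      (mul_nonneg (sub_nonneg.2 hya) (by positivity))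
  linarith

theorem optimal_af_gain_general (a b D : ℝ) (hb : 0 < b) :
    ∀ d ∈ Icc (0 : ℝ) D,
      (1 + a * b * d) ^ 2 / (b ^ 2 * d ^ 2 + 1)
        ≤ (1 + a * b * min (a / b) D) ^ 2 / (b ^ 2 * (min (a / b) D) ^ 2 + 1) := by
  rintro d ⟨hd0, hdD⟩
  have hsubst (t : ℝ) : (1 + a * b * t) ^ 2 / (b ^ 2 * t ^ 2 + 1) = afGain a (b * t) := by
    unfold afGain; ring
  rw [hsubst, hsubst]
  rcases le_total (a / b) D with hopt | hbudget
  · rw [min_eq_left hopt, mul_div_cancel₀ a hb.ne']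
    exact afGain_le_afGain_self a (b * d)
  · rw [min_eq_right hbudget]
    have hbD : b * D ≤ a := (le_div_iff₀' hb).1 hbudget
    have hbd : b * d ≤ b * D := mul_le_mul_of_nonneg_left hdD hb.le
    have hbd0 : 0 ≤ b * d := mul_nonneg hb.le hd0
    exact afGain_monotoneOn a ⟨hbd0, hbd.trans hbD⟩ ⟨hbd0.trans hbd, hbD⟩ hbd

/-- Optimal AF relay gain: `f(d) = (1 + abd)²/(b²d² + 1)` attains its maximum over
`[0, D]` at `d* = min{a/b, D}`. -/
theorem optimal_af_gain (a b D : ℝ) (ha : 0 < a) (hb : 0 < b) (hD : 0 < D) :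
    ∀ d ∈ Icc (0 : ℝ) D,
      (1 + a * b * d) ^ 2 / (b ^ 2 * d ^ 2 + 1)
        ≤ (1 + a * b * min (a / b) D) ^ 2 / (b ^ 2 * (min (a / b) D) ^ 2 + 1) :=
  optimal_af_gain_general a b D hb
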